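/- Let μ* ∈ 𝒫(X) be the unique fixed point of the mean-field equilibrium operator H and set π* := f_{μ*}. Let a, b ≥ 0, let μ_K ∈ 𝒫(X) with ‖μ_K − μ*‖₁ ≤ b, and let Q_K : X × U → ℝ be a function such that Q_K(x,·) attains a maximum over U for each x ∈ X and ‖Q_K − Q^{reg,*}_{μ_K}‖_∞ ≤ a. Define π_K(x) to be a maximizer of Q_K(x,·) over U. Then sup_{x∈X} ‖π_K(x) − π*(x)‖₁ ≤ √(θ (a + K_{H1} b)), where θ := 4/ρ and K_{H1} := Q_Lip/(1 − β) with Q_Lip := L1/(1 − βK1/2). (Deterministic core of Corollary 1.) -/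
import Mathlib


namespace MFG

open Finset

def IsProb {E : Type*} [Fintype E] (μ : E → ℝ) : Prop :=
  (∀ e, 0 ≤ μ e) ∧ ∑ e, μ e = 1

def l1 {E : Type*} [Fintype E] (μ ν : E → ℝ) : ℝ :=
  ∑ e, |μ e - ν e|

def ind {E : Type*} [DecidableEq E] (x y : E) : ℝ :=
  if x = y then 0 else 1

def RewardLip {X A : Type*} [Fintype X] [Fintype A] [DecidableEq X] [DecidableEq A]
    (r : X → A → (X → ℝ) → ℝ) (L1 : ℝ) : Prop :=
  ∀ x x' a a' μ μ', IsProb μ → IsProb μ' →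
    |r x a μ - r x' a' μ'| ≤ L1 * (ind x x' + 2 * ind a a' + l1 μ μ')

def KernelLip {X A : Type*} [Fintype X] [Fintype A] [DecidableEq X] [DecidableEq A]
    (p : X → A → (X → ℝ) → X → ℝ) (K1 : ℝ) : Prop :=
  ∀ x x' a a' μ μ', IsProb μ → IsProb μ' →
    l1 (p x a μ) (p x' a' μ') ≤ K1 * (ind x x' + 2 * ind a a' + l1 μ μ')

def IsKernel {X A : Type*} [Fintype X] [Fintype A]
    (p : X → A → (X → ℝ) → X → ℝ) : Prop :=
  ∀ x a μ, IsProb μ → IsProb (p x a μ)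

def RewardNonneg {X A : Type*} [Fintype X] [Fintype A]
    (r : X → A → (X → ℝ) → ℝ) : Prop :=
  ∀ x a μ, IsProb μ → 0 ≤ r x a μ

def OmegaLip {A : Type*} [Fintype A] (Ω : (A → ℝ) → ℝ) (Lreg : ℝ) : Prop :=
  ∀ u v, IsProb u → IsProb v → |Ω u - Ω v| ≤ Lreg * l1 u v

def StrongConvex {A : Type*} [Fintype A] (Ω : (A → ℝ) → ℝ)
    (DΩ : (A → ℝ) → (A → ℝ)) (ρ : ℝ) : Prop :=
  ∀ u v, IsProb u → IsProb v →
    Ω u + (∑ a, DΩ u a * (v a - u a)) + ρ / 2 * (l1 u v) ^ 2 ≤ Ω v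

noncomputable def Tbell {X A : Type*} [Fintype X] [Fintype A]
    (r : X → A → (X → ℝ) → ℝ) (p : X → A → (X → ℝ) → X → ℝ)
    (Ω : (A → ℝ) → ℝ) (β : ℝ) (μ : X → ℝ) (v : X → ℝ) (x : X) : ℝ :=
  ⨆ u : {w : A → ℝ // IsProb w},
    ((∑ a, r x a μ * u.1 a) - Ω u.1 + β * ∑ y, v y * (∑ a, p x a μ y * u.1 a))

noncomputable def Qmax {X A : Type*} [Fintype A] (Q : X → (A → ℝ) → ℝ) (y : X) : ℝ :=
  ⨆ u : {w : A → ℝ // IsProb w}, Q y u.1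

noncomputable def Lbell {X A : Type*} [Fintype X] [Fintype A]
    (r : X → A → (X → ℝ) → ℝ) (p : X → A → (X → ℝ) → X → ℝ)
    (Ω : (A → ℝ) → ℝ) (β : ℝ) (μ : X → ℝ) (Q : X → (A → ℝ) → ℝ)
    (x : X) (u : A → ℝ) : ℝ :=
  (∑ a, r x a μ * u a) - Ω u + β * ∑ y, Qmax Q y * (∑ a, p x a μ y * u a)

def BddFixedPoint {X A : Type*} [Fintype X] [Fintype A]
    (r : X → A → (X → ℝ) → ℝ) (p : X → A → (X → ℝ) → X → ℝ)
    (Ω : (A → ℝ) → ℝ) (β : ℝ) (μ : X → ℝ) (Q : X → (A → ℝ) → ℝ) : Prop :=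
  (∃ C, ∀ x u, IsProb u → |Q x u| ≤ C) ∧
  (∀ x u, IsProb u → Q x u = Lbell r p Ω β μ Q x u)

/-! ### Auxiliary lemmas -/

section Aux

variable {X A : Type*} [Fintype X] [Fintype A]

lemma isProb_uniform {A : Type*} [Fintype A] [Nonempty A] :
    IsProb (fun _ : A => (Fintype.card A : ℝ)⁻¹) := by
  constructor
  · intro _
    positivity
  · rw [Finset.sum_const, Finset.card_univ, nsmul_eq_mul]
    rw [mul_inv_cancel₀]
    exact_mod_cast Fintype.card_ne_zero

noncomputable instance instNonemptyProb {A : Type*} [Fintype A] [Nonempty A] :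
    Nonempty {w : A → ℝ // IsProb w} :=
  ⟨⟨_, isProb_uniform⟩⟩

lemma l1_nonneg {E : Type*} [Fintype E] (μ ν : E → ℝ) : 0 ≤ l1 μ ν :=
  Finset.sum_nonneg fun _ _ => abs_nonneg _

lemma l1_self {E : Type*} [Fintype E] (μ : E → ℝ) : l1 μ μ = 0 := by
  simp [l1]

lemma ind_self {E : Type*} [DecidableEq E] (x : E) : ind x x = 0 := by simp [ind]

lemma ind_nonneg {E : Type*} [DecidableEq E] (x y : E) : 0 ≤ ind x y := by
  unfold ind; split <;> norm_num

lemma ind_le_one {E : Type*} [DecidableEq E] (x y : E) : ind x y ≤ 1 := by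
  unfold ind; split <;> norm_num

/-- weighted average bound -/
lemma avg_le {E : Type*} [Fintype E] {f u : E → ℝ} {C : ℝ}
    (hu : IsProb u) (h : ∀ e, f e ≤ C) : ∑ e, f e * u e ≤ C := by
  calc ∑ e, f e * u e ≤ ∑ e, C * u e :=
        Finset.sum_le_sum fun e _ => mul_le_mul_of_nonneg_right (h e) (hu.1 e)
    _ = C := by rw [← Finset.mul_sum, hu.2, mul_one]

lemma abs_avg_le {E : Type*} [Fintype E] {f u : E → ℝ} {C : ℝ}
    (hu : IsProb u) (h : ∀ e, |f e| ≤ C) : |∑ e, f e * u e| ≤ C := by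
  calc |∑ e, f e * u e| ≤ ∑ e, |f e * u e| := Finset.abs_sum_le_sum_abs _ _
    _ = ∑ e, |f e| * u e := by
        refine Finset.sum_congr rfl fun e _ => ?_
        rw [abs_mul, abs_of_nonneg (hu.1 e)]
    _ ≤ C := avg_le hu h

/-- the Bellman operator is affine-minus-Ω in `u` -/
lemma lbell_eq (r : X → A → (X → ℝ) → ℝ) (p : X → A → (X → ℝ) → X → ℝ)
    (Ω : (A → ℝ) → ℝ) (β : ℝ) (μ : X → ℝ) (Q : X → (A → ℝ) → ℝ)
    (x : X) (u : A → ℝ) :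
    Lbell r p Ω β μ Q x u =
      (∑ a, (r x a μ + β * ∑ y, Qmax Q y * p x a μ y) * u a) - Ω u := by
  unfold Lbell
  have : β * ∑ y, Qmax Q y * (∑ a, p x a μ y * u a)
      = ∑ a, (β * ∑ y, Qmax Q y * p x a μ y) * u a := by
    simp only [Finset.mul_sum, Finset.sum_mul]
    rw [Finset.sum_comm]
    exact Finset.sum_congr rfl fun a _ => Finset.sum_congr rfl fun y _ => by ring
  rw [this]
  rw [Finset.sum_congr rfl (fun a (_ : a ∈ Finset.univ) => add_mul
    (r x a μ) (β * ∑ y, Qmax Q y * p x a μ y) (u a)), Finset.sum_add_distrib]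
  ring

/-- span seminorm trick -/
lemma span_trick {X : Type*} [Fintype X] [Nonempty X] (g : X → ℝ) (P P' : X → ℝ)
    (hP : IsProb P) (hP' : IsProb P')
    {gmin gmax : ℝ} (h1 : ∀ y, gmin ≤ g y) (h2 : ∀ y, g y ≤ gmax) :
    |∑ y, g y * (P y - P' y)| ≤ (gmax - gmin) / 2 * l1 P P' := by
  set m := (gmax + gmin) / 2 with hm
  have key : ∑ y, g y * (P y - P' y) = ∑ y, (g y - m) * (P y - P' y) := by
    have h0 : ∑ y, m * (P y - P' y) = 0 := by
      rw [← Finset.mul_sum, Finset.sum_sub_distrib, hP.2, hP'.2]; ring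
    calc ∑ y, g y * (P y - P' y)
        = ∑ y, ((g y - m) * (P y - P' y) + m * (P y - P' y)) :=
          Finset.sum_congr rfl fun y _ => by ring
      _ = _ := by rw [Finset.sum_add_distrib, h0, add_zero]
  rw [key]
  calc |∑ y, (g y - m) * (P y - P' y)| ≤ ∑ y, |(g y - m) * (P y - P' y)| :=
        Finset.abs_sum_le_sum_abs _ _
    _ ≤ ∑ y, (gmax - gmin) / 2 * |P y - P' y| := by
        refine Finset.sum_le_sum fun y _ => ?_
        rw [abs_mul]
        refine mul_le_mul_of_nonneg_right ?_ (abs_nonneg _)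
        rw [abs_le]
        constructor
        · have := h1 y; simp only [hm]; linarith
        · have := h2 y; simp only [hm]; linarith
    _ = (gmax - gmin) / 2 * l1 P P' := by rw [l1, Finset.mul_sum]

end Aux

set_option maxHeartbeats 1000000 in
/-- deterministic core of Corollary 1:
`sup_x ‖π_K(x) - π*(x)‖₁ ≤ √(θ (a + K_{H1} b))` with `θ = 4/ρ`. -/
theorem statement19 {X A : Type*} [Fintype X] [Fintype A] [Nonempty X] [Nonempty A]
    [DecidableEq X] [DecidableEq A]
    (r : X → A → (X → ℝ) → ℝ) (p : X → A → (X → ℝ) → X → ℝ)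
    (L1 K1 : ℝ) (hL1 : 0 ≤ L1) (hK1 : 0 ≤ K1)
    (hr_nonneg : RewardNonneg r) (hr : RewardLip r L1)
    (hp_prob : IsKernel p) (hp : KernelLip p K1)
    (Ω : (A → ℝ) → ℝ) (DΩ : (A → ℝ) → (A → ℝ)) (ρ : ℝ) (hρ : 0 < ρ)
    (hΩ : StrongConvex Ω DΩ ρ)
    (β : ℝ) (hβ0 : 0 < β) (hβ1 : β < 1) (hβK : β * K1 / 2 < 1)
    -- Assumption 2: K_H < 1
    (hKH : (3 * K1 / 2) * (1 + ((L1 / (1 - β * K1 / 2)) / (1 - β)) / ρ) < 1)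
    -- μ* : the fixed point of the MFE operator, and π* = f_{μ*}
    (μstar : X → ℝ) (hμstar : IsProb μstar)
    (Qstar : X → (A → ℝ) → ℝ) (hQstar : BddFixedPoint r p Ω β μstar Qstar)
    (πstar : X → A → ℝ) (hπstar : ∀ x, IsProb (πstar x))
    (hπstarmax : ∀ x u, IsProb u → Qstar x u ≤ Qstar x (πstar x))
    (hfix : ∀ y, μstar y = ∑ x, (∑ a, p x a μstar y * πstar x a) * μstar x)
    -- the learned measure μ_K and Q-function Q_K
    (a b : ℝ) (ha : 0 ≤ a) (hb : 0 ≤ b)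
    (μK : X → ℝ) (hμK : IsProb μK) (hμKb : l1 μK μstar ≤ b)
    (QsK : X → (A → ℝ) → ℝ) (hQsK : BddFixedPoint r p Ω β μK QsK)
    (QK : X → (A → ℝ) → ℝ)
    (hQKa : ∀ x u, IsProb u → |QK x u - QsK x u| ≤ a)
    (πK : X → A → ℝ) (hπK : ∀ x, IsProb (πK x))
    (hπKmax : ∀ x u, IsProb u → QK x u ≤ QK x (πK x)) :
    ∀ x, l1 (πK x) (πstar x) ≤
      Real.sqrt ((4 / ρ) * (a + ((L1 / (1 - β * K1 / 2)) / (1 - β)) * b)) := by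
  have hβK' : 0 < 1 - β * K1 / 2 := by linarith
  have hβ' : 0 < 1 - β := by linarith
  set QLip := L1 / (1 - β * K1 / 2) with hQLipdef
  have hQLip0 : 0 ≤ QLip := div_nonneg hL1 hβK'.le
  set KH1 := QLip / (1 - β) with hKH1def
  have hKH10 : 0 ≤ KH1 := div_nonneg hQLip0 hβ'.le
  obtain ⟨⟨CK, hCK⟩, hQsKfix⟩ := hQsK
  obtain ⟨⟨CS, hCS⟩, hQstarfix⟩ := hQstar
  -- boundedness of the ranges defining Qmax
  have bddK : ∀ y, BddAbove (Set.range fun u : {w : A → ℝ // IsProb w} => QsK y u.1) :=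
    fun y => ⟨CK, by rintro _ ⟨v, rfl⟩; exact (abs_le.1 (hCK y v.1 v.2)).2⟩
  have bddS : ∀ y, BddAbove (Set.range fun u : {w : A → ℝ // IsProb w} => Qstar y u.1) :=
    fun y => ⟨CS, by rintro _ ⟨v, rfl⟩; exact (abs_le.1 (hCS y v.1 v.2)).2⟩
  -- linear-minus-Ω representations
  set cK : X → A → ℝ := fun z c => r z c μK + β * ∑ y, Qmax QsK y * p z c μK y with hcKdef
  set cS : X → A → ℝ := fun z c => r z c μstar + β * ∑ y, Qmax Qstar y * p z c μstar y
    with hcSdef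
  have hQsKeq : ∀ z u, IsProb u → QsK z u = (∑ c, cK z c * u c) - Ω u := fun z u hu => by
    rw [hQsKfix z u hu, lbell_eq]
  have hQstareq : ∀ z u, IsProb u → Qstar z u = (∑ c, cS z c * u c) - Ω u := fun z u hu => by
    rw [hQstarfix z u hu, lbell_eq]
  -- the sup over (x,a) of |cK - cS|
  have hXA : (Finset.univ : Finset (X × A)).Nonempty := Finset.univ_nonempty
  set E := Finset.univ.sup' hXA (fun za : X × A => |cK za.1 za.2 - cS za.1 za.2|) with hEdef
  have hEle : ∀ z c, |cK z c - cS z c| ≤ E := fun z c =>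
    Finset.le_sup' (fun za : X × A => |cK za.1 za.2 - cS za.1 za.2|) (Finset.mem_univ (z, c))
  -- pointwise difference of the two fixed points is bounded by E
  have hdiff : ∀ z u, IsProb u → |QsK z u - Qstar z u| ≤ E := by
    intro z u hu
    rw [hQsKeq z u hu, hQstareq z u hu]
    have heq : (∑ c, cK z c * u c) - Ω u - ((∑ c, cS z c * u c) - Ω u)
        = ∑ c, (cK z c - cS z c) * u c := by
      rw [Finset.sum_congr rfl fun c (_ : c ∈ Finset.univ) =>
        sub_mul (cK z c) (cS z c) (u c), Finset.sum_sub_distrib]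
      ring
    rw [heq]
    exact abs_avg_le hu fun c => hEle z c
  -- difference of the maxima is bounded by E
  have hM : ∀ y, |Qmax QsK y - Qmax Qstar y| ≤ E := by
    intro y
    rw [abs_sub_le_iff]
    constructor
    · rw [sub_le_iff_le_add]
      refine ciSup_le fun u => ?_
      have h1 := (abs_sub_le_iff.1 (hdiff y u.1 u.2)).1
      have h2 : Qstar y u.1 ≤ Qmax Qstar y := le_ciSup (bddS y) u
      linarith
    · rw [sub_le_iff_le_add]
      refine ciSup_le fun u => ?_
      have h1 := (abs_sub_le_iff.1 (hdiff y u.1 u.2)).2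
      have h2 : QsK y u.1 ≤ Qmax QsK y := le_ciSup (bddK y) u
      linarith
  -- span of Qmax Qstar
  set g : X → ℝ := Qmax Qstar with hgdef
  have hXne : (Finset.univ : Finset X).Nonempty := Finset.univ_nonempty
  set gmax := Finset.univ.sup' hXne g with hgmax
  set gmin := Finset.univ.inf' hXne g with hgmin
  have hgle : ∀ y, g y ≤ gmax := fun y => Finset.le_sup' g (Finset.mem_univ y)
  have hgge : ∀ y, gmin ≤ g y := fun y => Finset.inf'_le g (Finset.mem_univ y)
  set s := gmax - gmin with hsdef
  have hs0 : 0 ≤ s := by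
    obtain ⟨y⟩ := (inferInstance : Nonempty X)
    have := hgle y; have := hgge y
    simp only [hsdef]; linarith
  -- Qmax Qstar is attained at πstar
  have hgatt : ∀ y, g y = Qstar y (πstar y) := fun y =>
    le_antisymm (ciSup_le fun u => hπstarmax y u.1 u.2)
      (le_ciSup (bddS y) ⟨πstar y, hπstar y⟩)
  -- span bound : s ≤ QLip
  have hsQ : s ≤ QLip := by
    obtain ⟨ya, _, hya⟩ := Finset.exists_mem_eq_sup' hXne g
    obtain ⟨yb, _, hyb⟩ := Finset.exists_mem_eq_inf' hXne g
    -- per-action bound on cS differences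
    have hc : ∀ c : A, cS ya c - cS yb c ≤ L1 + β * (s / 2) * K1 := by
      intro c
      have hr1 : |r ya c μstar - r yb c μstar| ≤ L1 := by
        have := hr ya yb c c μstar μstar hμstar hμstar
        rw [ind_self, l1_self] at this
        calc |r ya c μstar - r yb c μstar| ≤ L1 * (ind ya yb + (2 * 0 + 0)) := by
              convert this using 2; ring
          _ ≤ L1 * 1 := by
              have := ind_le_one ya yb; have := ind_nonneg ya yb
              have : ind ya yb + (2 * 0 + 0) ≤ 1 := by linarith
              exact mul_le_mul_of_nonneg_left this hL1
          _ = L1 := mul_one L1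
      have hp1 : l1 (p ya c μstar) (p yb c μstar) ≤ K1 := by
        have := hp ya yb c c μstar μstar hμstar hμstar
        rw [ind_self, l1_self] at this
        calc l1 (p ya c μstar) (p yb c μstar) ≤ K1 * (ind ya yb + 2 * 0 + 0) := this
          _ ≤ K1 * 1 := by
              have h1 := ind_le_one ya yb
              refine mul_le_mul_of_nonneg_left (by linarith) hK1
          _ = K1 := mul_one K1
      have hsp : |∑ y, g y * (p ya c μstar y - p yb c μstar y)| ≤ s / 2 * K1 := by
        calc |∑ y, g y * (p ya c μstar y - p yb c μstar y)|
            ≤ (gmax - gmin) / 2 * l1 (p ya c μstar) (p yb c μstar) :=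
              span_trick g _ _ (hp_prob ya c μstar hμstar) (hp_prob yb c μstar hμstar)
                hgge hgle
          _ ≤ s / 2 * K1 := by
              rw [← hsdef]
              exact mul_le_mul_of_nonneg_left hp1 (by linarith)
      have hsum : ∑ y, g y * p ya c μstar y - ∑ y, g y * p yb c μstar y
          = ∑ y, g y * (p ya c μstar y - p yb c μstar y) := by
        rw [Finset.sum_congr rfl fun y (_ : y ∈ Finset.univ) =>
          mul_sub (g y) (p ya c μstar y) (p yb c μstar y), Finset.sum_sub_distrib]
      have h2 : cS ya c - cS yb c
          = (r ya c μstar - r yb c μstar)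
            + β * (∑ y, g y * (p ya c μstar y - p yb c μstar y)) := by
        simp only [hcSdef, ← hgdef, ← hsum]; ring
      rw [h2]
      have hb1 : r ya c μstar - r yb c μstar ≤ L1 := (abs_le.1 hr1).2
      have hb2 : β * (∑ y, g y * (p ya c μstar y - p yb c μstar y)) ≤ β * (s / 2 * K1) :=
        mul_le_mul_of_nonneg_left (le_trans (le_abs_self _) hsp) hβ0.le
      have : β * (s / 2 * K1) = β * (s / 2) * K1 := by ring
      linarith
    -- s ≤ Qstar ya (πstar ya) - Qstar yb (πstar ya)
    have h1 : Qstar yb (πstar ya) ≤ g yb := le_ciSup (bddS yb) ⟨πstar ya, hπstar ya⟩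
    have h2 : s ≤ Qstar ya (πstar ya) - Qstar yb (πstar ya) := by
      have := hgatt ya
      simp only [hsdef, hya, hyb] at *
      linarith
    have h3 : Qstar ya (πstar ya) - Qstar yb (πstar ya) ≤ L1 + β * (s / 2) * K1 := by
      rw [hQstareq ya (πstar ya) (hπstar ya), hQstareq yb (πstar ya) (hπstar ya)]
      have heq : (∑ c, cS ya c * πstar ya c) - Ω (πstar ya)
          - ((∑ c, cS yb c * πstar ya c) - Ω (πstar ya))
          = ∑ c, (cS ya c - cS yb c) * πstar ya c := by
        rw [Finset.sum_congr rfl fun c (_ : c ∈ Finset.univ) =>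
          sub_mul (cS ya c) (cS yb c) (πstar ya c), Finset.sum_sub_distrib]
        ring
      rw [heq]
      exact avg_le (hπstar ya) hc
    have hs1 : s ≤ L1 + β * (s / 2) * K1 := le_trans h2 h3
    rw [hQLipdef, le_div_iff₀ hβK']
    nlinarith
  -- bound on E : E ≤ KH1 * b
  have hEb : E ≤ KH1 * b := by
    obtain ⟨za, _, hza⟩ := Finset.exists_mem_eq_sup' hXA
      (fun za : X × A => |cK za.1 za.2 - cS za.1 za.2|)
    set z := za.1; set c := za.2
    have hr1 : |r z c μK - r z c μstar| ≤ L1 * b := by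
      have := hr z z c c μK μstar hμK hμstar
      rw [ind_self, ind_self] at this
      calc |r z c μK - r z c μstar| ≤ L1 * (0 + 2 * 0 + l1 μK μstar) := this
        _ = L1 * l1 μK μstar := by ring_nf
        _ ≤ L1 * b := mul_le_mul_of_nonneg_left hμKb hL1
    have hp1 : l1 (p z c μK) (p z c μstar) ≤ K1 * b := by
      have := hp z z c c μK μstar hμK hμstar
      rw [ind_self, ind_self] at this
      calc l1 (p z c μK) (p z c μstar) ≤ K1 * (0 + 2 * 0 + l1 μK μstar) := this
        _ = K1 * l1 μK μstar := by ring_nf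
        _ ≤ K1 * b := mul_le_mul_of_nonneg_left hμKb hK1
    -- decompose the difference of the two continuation terms
    have hT1 : |∑ y, Qmax QsK y * p z c μK y - ∑ y, g y * p z c μK y| ≤ E := by
      have heq : ∑ y, Qmax QsK y * p z c μK y - ∑ y, g y * p z c μK y
          = ∑ y, (Qmax QsK y - g y) * p z c μK y := by
        rw [Finset.sum_congr rfl fun y (_ : y ∈ Finset.univ) =>
          sub_mul (Qmax QsK y) (g y) (p z c μK y), Finset.sum_sub_distrib]
      rw [heq]
      exact abs_avg_le (hp_prob z c μK hμK) fun y => hM y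
    have hT2 : |∑ y, g y * p z c μK y - ∑ y, g y * p z c μstar y| ≤ s / 2 * (K1 * b) := by
      have heq : ∑ y, g y * p z c μK y - ∑ y, g y * p z c μstar y
          = ∑ y, g y * (p z c μK y - p z c μstar y) := by
        rw [Finset.sum_congr rfl fun y (_ : y ∈ Finset.univ) =>
          mul_sub (g y) (p z c μK y) (p z c μstar y), Finset.sum_sub_distrib]
      rw [heq]
      calc |∑ y, g y * (p z c μK y - p z c μstar y)|
          ≤ (gmax - gmin) / 2 * l1 (p z c μK) (p z c μstar) :=
            span_trick g _ _ (hp_prob z c μK hμK) (hp_prob z c μstar hμstar) hgge hgle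
        _ ≤ s / 2 * (K1 * b) := by
            rw [← hsdef]
            exact mul_le_mul_of_nonneg_left hp1 (by linarith)
    have hEeq : E = |cK z c - cS z c| := hza
    have hsplit : cK z c - cS z c
        = (r z c μK - r z c μstar)
          + β * ((∑ y, Qmax QsK y * p z c μK y - ∑ y, g y * p z c μK y)
              + (∑ y, g y * p z c μK y - ∑ y, g y * p z c μstar y)) := by
      simp only [hcKdef, hcSdef, ← hgdef]; ring
    have hE1 : E ≤ L1 * b + β * (E + s / 2 * (K1 * b)) := by
      have habs1 : |(r z c μK - r z c μstar)
            + β * ((∑ y, Qmax QsK y * p z c μK y - ∑ y, g y * p z c μK y)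
                + (∑ y, g y * p z c μK y - ∑ y, g y * p z c μstar y))|
          ≤ |r z c μK - r z c μstar|
            + |β * ((∑ y, Qmax QsK y * p z c μK y - ∑ y, g y * p z c μK y)
                + (∑ y, g y * p z c μK y - ∑ y, g y * p z c μstar y))| := abs_add_le _ _
      have habs2 : |β * ((∑ y, Qmax QsK y * p z c μK y - ∑ y, g y * p z c μK y)
                + (∑ y, g y * p z c μK y - ∑ y, g y * p z c μstar y))|
          ≤ β * (|∑ y, Qmax QsK y * p z c μK y - ∑ y, g y * p z c μK y|
                + |∑ y, g y * p z c μK y - ∑ y, g y * p z c μstar y|) := by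
        rw [abs_mul, abs_of_pos hβ0]
        exact mul_le_mul_of_nonneg_left (abs_add_le _ _) hβ0.le
      have hmono : β * (|∑ y, Qmax QsK y * p z c μK y - ∑ y, g y * p z c μK y|
                + |∑ y, g y * p z c μK y - ∑ y, g y * p z c μstar y|)
          ≤ β * (E + s / 2 * (K1 * b)) :=
        mul_le_mul_of_nonneg_left (add_le_add hT1 hT2) hβ0.le
      have hval : |cK z c - cS z c| ≤ L1 * b + β * (E + s / 2 * (K1 * b)) := by
        rw [hsplit]; linarith
      exact le_of_eq_of_le hEeq hval
    -- now solve for E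
    have hL1eq : L1 = QLip * (1 - β * K1 / 2) :=
      (div_mul_cancel₀ L1 hβK'.ne').symm
    have hsb : β * (s / 2 * (K1 * b)) ≤ β * (QLip / 2 * (K1 * b)) := by
      refine mul_le_mul_of_nonneg_left ?_ hβ0.le
      refine mul_le_mul_of_nonneg_right ?_ (by positivity)
      linarith
    have hE2 : E * (1 - β) ≤ QLip * b := by nlinarith
    rw [hKH1def, div_mul_eq_mul_div, le_div_iff₀ hβ']
    linarith [hE2]
  -- now the main argument, for each x
  intro x
  set u : A → ℝ := πK x with hudef
  set v : A → ℝ := πstar x with hvdef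
  have hu : IsProb u := hπK x
  have hv : IsProb v := hπstar x
  set d := l1 u v with hddef
  have hd0 : 0 ≤ d := l1_nonneg _ _
  -- strong concavity step : ρ/2 d² ≤ Qstar x v - Qstar x u
  have key : ∀ t : ℝ, 0 < t → t ≤ 1 →
      ρ / 2 * (1 - t) * d ^ 2 ≤ Qstar x v - Qstar x u := by
    intro t ht0 ht1
    set ut : A → ℝ := fun c => (1 - t) * v c + t * u c with hutdef
    have hut : IsProb ut := by
      constructor
      · intro c
        have := hv.1 c; have := hu.1 c
        have h1 : 0 ≤ (1 - t) * v c := mul_nonneg (by linarith) (hv.1 c)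
        have h2 : 0 ≤ t * u c := mul_nonneg ht0.le (hu.1 c)
        simp only [hutdef]; linarith
      · simp only [hutdef]
        rw [Finset.sum_add_distrib, ← Finset.mul_sum, ← Finset.mul_sum, hu.2, hv.2]
        ring
    have hl1v : l1 ut v = t * d := by
      simp only [l1, hddef, hutdef, Finset.mul_sum]
      refine Finset.sum_congr rfl fun c _ => ?_
      rw [show (1 - t) * v c + t * u c - v c = t * (u c - v c) by ring, abs_mul,
        abs_of_pos ht0]
    have hl1u : l1 ut u = (1 - t) * d := by
      simp only [l1, hddef, hutdef, Finset.mul_sum]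
      refine Finset.sum_congr rfl fun c _ => ?_
      rw [show (1 - t) * v c + t * u c - u c = (1 - t) * (v c - u c) by ring, abs_mul,
        abs_of_nonneg (by linarith : (0:ℝ) ≤ 1 - t), abs_sub_comm]
    have SC1 := hΩ ut v hut hv
    have SC2 := hΩ ut u hut hu
    rw [hl1v] at SC1
    rw [hl1u] at SC2
    have hzero : (1 - t) * (∑ c, DΩ ut c * (v c - ut c))
        + t * (∑ c, DΩ ut c * (u c - ut c)) = 0 := by
      rw [Finset.mul_sum, Finset.mul_sum, ← Finset.sum_add_distrib]
      refine Finset.sum_eq_zero fun c _ => ?_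
      simp only [hutdef]; ring
    -- convexity with strong term
    have hconv : Ω ut + ρ / 2 * t * (1 - t) * d ^ 2 ≤ (1 - t) * Ω v + t * Ω u := by
      have h1 := mul_le_mul_of_nonneg_left SC1 (by linarith : (0:ℝ) ≤ 1 - t)
      have h2 := mul_le_mul_of_nonneg_left SC2 ht0.le
      linarith [h1, h2, hzero]
    -- optimality of v for Qstar x
    have hopt : Qstar x ut ≤ Qstar x v := hπstarmax x ut hut
    rw [hQstareq x ut hut, hQstareq x v hv] at hopt
    have hlin : ∑ c, cS x c * ut c
        = (1 - t) * (∑ c, cS x c * v c) + t * (∑ c, cS x c * u c) := by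
      rw [Finset.mul_sum, Finset.mul_sum, ← Finset.sum_add_distrib]
      refine Finset.sum_congr rfl fun c _ => ?_
      simp only [hutdef]; ring
    rw [hlin] at hopt
    -- combine and divide by t
    have hmul : t * (Qstar x u + ρ / 2 * (1 - t) * d ^ 2) ≤ t * Qstar x v := by
      rw [hQstareq x u hu, hQstareq x v hv]
      linarith [hconv, hopt]
    have := le_of_mul_le_mul_left hmul ht0
    linarith
  have hG : ρ / 2 * d ^ 2 ≤ Qstar x v - Qstar x u := by
    refine le_of_forall_pos_le_add fun ε hε => ?_
    set D : ℝ := ρ / 2 * d ^ 2 + 1 with hDdef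
    have hD0 : 0 < D := by positivity
    set t : ℝ := min 1 (ε / D) with htdef
    have ht0 : 0 < t := lt_min one_pos (div_pos hε hD0)
    have ht1 : t ≤ 1 := min_le_left _ _
    have hkey := key t ht0 ht1
    have htle : t ≤ ε / D := min_le_right _ _
    have hsmall : ρ / 2 * t * d ^ 2 ≤ ε := by
      have h1 : ρ / 2 * d ^ 2 * t ≤ ρ / 2 * d ^ 2 * (ε / D) :=
        mul_le_mul_of_nonneg_left htle (by positivity)
      have h2 : ρ / 2 * d ^ 2 * (ε / D) ≤ D * (ε / D) :=
        mul_le_mul_of_nonneg_right (by simp only [hDdef]; linarith) (by positivity)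
      have h3 : D * (ε / D) = ε := by field_simp
      linarith
    linarith [hkey, hsmall]
  -- approximate optimality step : Qstar x v - Qstar x u ≤ 2a + 2E
  have hF : QsK x v - QsK x u ≤ 2 * a := by
    have h1 : QsK x v ≤ QK x v + a := by
      have := (abs_le.1 (hQKa x v hv)).1; linarith
    have h2 : QK x v ≤ QK x u := hπKmax x v hv
    have h3 : QK x u ≤ QsK x u + a := by
      have := (abs_le.1 (hQKa x u hu)).2; linarith
    linarith
  have hstep2 : Qstar x v - Qstar x u ≤ 2 * a + 2 * E := by
    have h1 := (abs_le.1 (hdiff x v hv)).1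
    have h2 := (abs_le.1 (hdiff x u hu)).2
    linarith
  -- conclude
  have hd2 : d ^ 2 ≤ 4 / ρ * (a + KH1 * b) := by
    have h1 : ρ / 2 * d ^ 2 ≤ 2 * a + 2 * (KH1 * b) := by
      have := mul_le_mul_of_nonneg_left hEb (by norm_num : (0:ℝ) ≤ 2)
      linarith [hG, hstep2]
    rw [div_mul_eq_mul_div, le_div_iff₀ hρ]
    nlinarith
  have hrhs0 : 0 ≤ 4 / ρ * (a + KH1 * b) :=
    mul_nonneg (by positivity) (by nlinarith [mul_nonneg hKH10 hb])
  exact (Real.le_sqrt hd0 hrhs0).mpr hd2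

end MFG
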